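/- arXiv:1404.4220 — 4 statements merged into one kernel-verified Lean document; each statement's English description precedes it below -/
import Mathlib

section
/- Let V : ℝ₊ → ℝ be a smooth convex function with e^{−V} integrable on ℝ₊ and ∫_t^∞ e^{−V(s)} ds > 0 for all t ≥ 0. Define the hazard rate r(t) = e^{−V(t)} / ∫_t^∞ e^{−V(s)} ds. Then r(t) ≥ V'(t) for all t ≥ 0, and r is nondecreasing on ℝ₊. -/
open Set MeasureTheory

theorem stmt_3 (V : ℝ → ℝ) (hV : ContDiff ℝ (⊤ : ℕ∞) V) (hconv : ConvexOn ℝ (Ici 0) V)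
    (hint : IntegrableOn (fun s => Real.exp (-V s)) (Ici 0))
    (hpos : ∀ t ≥ (0:ℝ), 0 < ∫ s in Ici t, Real.exp (-V s))
    (r : ℝ → ℝ) (hr : r = fun t => Real.exp (-V t) / ∫ s in Ici t, Real.exp (-V s)) :
    (∀ t ≥ (0:ℝ), deriv V t ≤ r t) ∧ MonotoneOn r (Ici 0) := by
  set f : ℝ → ℝ := fun s => Real.exp (-V s) with hf
  set F : ℝ → ℝ := fun t => ∫ s in Ici t, f s with hF
  have hVc : Continuous V := hV.continuous
  have hfc : Continuous f := (continuous_neg.comp hVc).rexp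
  have hVd : Differentiable ℝ V := hV.differentiable (by simp)
  -- Key inequality: deriv V t * F t ≤ f t for t ≥ 0
  have key : ∀ t ≥ (0:ℝ), deriv V t * F t ≤ f t := by
    intro t ht
    set c := deriv V t with hc
    rcases le_or_gt c 0 with hc0 | hc0
    · have : c * F t ≤ 0 := mul_nonpos_of_nonpos_of_nonneg hc0 (hpos t ht).le
      exact this.trans (Real.exp_pos _).le
    · -- c > 0 : use support line
      have hsub : Ici t ⊆ Ici (0:ℝ) := Ici_subset_Ici.mpr ht
      have hptwise : ∀ s ∈ Ici t, f s ≤ Real.exp (-V t + c * t) * Real.exp (-(c * s)) := by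
        intro s hs
        rw [← Real.exp_add]
        apply Real.exp_le_exp.mpr
        rcases eq_or_lt_of_le (mem_Ici.mp hs) with h | h
        · subst h; ring_nf; exact le_rfl
        · have hslope := hconv.deriv_le_slope (mem_Ici.mpr ht) (hsub hs)
            h (hVd t)
          rw [slope_def_field] at hslope
          have : c * (s - t) ≤ V s - V t := by
            have hst : (0:ℝ) < s - t := sub_pos.mpr h
            calc c * (s - t) ≤ (V s - V t) / (s - t) * (s - t) := by
                  apply mul_le_mul_of_nonneg_right _ hst.le
                  simpa [div_sub_div_same] using hslope
              _ = V s - V t := by field_simp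
          linarith
      have hintf : IntegrableOn f (Ici t) := hint.mono_set hsub
      have hintg : IntegrableOn (fun s => Real.exp (-V t + c * t) * Real.exp (-(c * s))) (Ici t) := by
        rw [integrableOn_Ici_iff_integrableOn_Ioi]
        exact ((exp_neg_integrableOn_Ioi t hc0).congr_fun
          (fun x _ => by ring_nf) measurableSet_Ioi).const_mul _
      have hmono : F t ≤ ∫ s in Ici t, Real.exp (-V t + c * t) * Real.exp (-(c * s)) :=
        setIntegral_mono_on hintf hintg measurableSet_Ici hptwise
      have hval : (∫ s in Ici t, Real.exp (-V t + c * t) * Real.exp (-(c * s)))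
          = Real.exp (-V t) / c := by
        rw [integral_const_mul, integral_Ici_eq_integral_Ioi]
        have : (fun s : ℝ => Real.exp (-(c * s))) = (fun s : ℝ => Real.exp (-s)) ∘ (fun s => c * s) := rfl
        rw [show (∫ s in Ioi t, Real.exp (-(c * s))) = ∫ s in Ioi t, ((fun u => Real.exp (-u)) (c * s)) from rfl,
          integral_comp_mul_left_Ioi (fun u => Real.exp (-u)) t hc0, integral_exp_neg_Ioi]
        rw [smul_eq_mul, mul_comm c⁻¹, ← mul_assoc, ← Real.exp_add, div_eq_mul_inv]
        congr 2
        ring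
      rw [hval] at hmono
      calc c * F t ≤ c * (Real.exp (-V t) / c) := by
            exact mul_le_mul_of_nonneg_left hmono hc0.le
        _ = f t := by field_simp; rfl
  -- F equals a primitive on Ici 0
  have hG : ∀ t ≥ (0:ℝ), F t = F 0 - ∫ u in (0:ℝ)..t, f u := by
    intro t ht
    have h1 : F 0 = (∫ u in Ioc 0 t, f u) + F t := by
      have hd : Disjoint (Ioc (0:ℝ) t) (Ioi t) := Ioc_disjoint_Ioi le_rfl
      have hu : Ioc (0:ℝ) t ∪ Ioi t = Ioi 0 := Ioc_union_Ioi_eq_Ioi ht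
      rw [hF]
      simp only [integral_Ici_eq_integral_Ioi]
      rw [← hu, setIntegral_union hd measurableSet_Ioi
        (hint.mono_set (fun x hx => le_of_lt hx.1))
        (hint.mono_set (fun x hx => le_trans ht (le_of_lt hx)))]
    rw [intervalIntegral.integral_of_le ht, h1]; ring
  have part1 : ∀ t ≥ (0:ℝ), deriv V t ≤ r t := by
    intro t ht
    rw [hr]
    rw [le_div_iff₀ (hpos t ht)]
    exact key t ht
  refine ⟨part1, ?_⟩
  have hcontG : Continuous fun x => ∫ u in (0:ℝ)..x, f u :=
    intervalIntegral.continuous_primitive (fun a b => hfc.intervalIntegrable a b) 0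
  have hFcont : ContinuousOn F (Ici 0) :=
    ((continuous_const.sub hcontG).continuousOn).congr (fun x hx => hG x hx)
  have hrcont : ContinuousOn r (Ici 0) := by
    rw [hr]
    exact hfc.continuousOn.div hFcont (fun x hx => (hpos x hx).ne')
  have hderiv : ∀ t ∈ Ioi (0:ℝ), HasDerivAt r
      ((-deriv V t * f t * F t - f t * -f t) / F t ^ 2) t := by
    intro t ht
    have htpos : (0:ℝ) < t := ht
    have hGd : HasDerivAt (fun x => ∫ u in (0:ℝ)..x, f u) (f t) t :=
      intervalIntegral.integral_hasDerivAt_right (hfc.intervalIntegrable 0 t)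
        (hfc.stronglyMeasurableAtFilter _ _) hfc.continuousAt
    have hFd : HasDerivAt F (-f t) t := by
      have h1 : HasDerivAt (fun x => F 0 - ∫ u in (0:ℝ)..x, f u) (-f t) t := by
        exact ((hasDerivAt_const t (F 0)).sub hGd).congr_deriv (by ring)
      apply h1.congr_of_eventuallyEq
      filter_upwards [Ioi_mem_nhds htpos] with x hx
      exact hG x (le_of_lt hx)
    have hnum : HasDerivAt (fun x => Real.exp (-V x)) (-deriv V t * f t) t := by
      have := (Real.hasDerivAt_exp (-V t)).comp t ((hVd t).hasDerivAt.neg)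
      exact this.congr_deriv (by simp only [hf]; ring)
    have hdiv := hnum.div hFd (hpos t htpos.le).ne'
    rw [hr]
    exact hdiv
  apply monotoneOn_of_deriv_nonneg (convex_Ici 0) hrcont
  · intro x hx
    rw [interior_Ici] at hx
    exact (hderiv x hx).differentiableAt.differentiableWithinAt
  · intro x hx
    rw [interior_Ici] at hx
    rw [(hderiv x hx).deriv]
    apply div_nonneg _ (sq_nonneg _)
    have h1 := key x hx.le
    have h2 : (0:ℝ) < f x := Real.exp_pos _
    nlinarith
end

section
/- Let λ : ℝ₊ → (0,∞) be smooth and nondecreasing, and set Λ_x(t) = ∫_0^t λ(x+u) du for x, t ≥ 0. Fix x ≥ 0 and t > 0, and define G(s) = Λ_{x+t}^{-1}(Λ_x(s)) for s ≥ 0 (where Λ_y^{-1} denotes the inverse of the strictly increasing function u ↦ Λ_y(u)). Then 0 ≤ G'(s) ≤ 1 for all s ≥ 0, so G is 1-Lipschitz. -/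
open Set intervalIntegral Filter

theorem stmt_4 (lam : ℝ → ℝ) (hsm : ContDiff ℝ (⊤ : ℕ∞) lam)
    (hpos : ∀ x ≥ (0:ℝ), 0 < lam x) (hmono : MonotoneOn lam (Ici 0))
    (x t : ℝ) (hx : 0 ≤ x) (ht : 0 < t)
    (G : ℝ → ℝ)
    (hG : ∀ s ≥ (0:ℝ), 0 ≤ G s ∧
      (∫ u in (0:ℝ)..(G s), lam (x + t + u)) = ∫ u in (0:ℝ)..s, lam (x + u)) :
    (∀ s ≥ (0:ℝ), 0 ≤ deriv G s ∧ deriv G s ≤ 1) ∧ LipschitzOnWith 1 G (Ici 0) := by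
  -- μ is a positive monotone continuous extension of lam to all of ℝ
  set μ : ℝ → ℝ := fun a => lam (max a 0) with hμ
  have μcont : Continuous μ := hsm.continuous.comp (continuous_id.max continuous_const)
  have μpos : ∀ a, 0 < μ a := fun a => hpos _ (le_max_right _ _)
  have μmono : Monotone μ := fun a b hab =>
    hmono (show max a 0 ∈ Ici 0 from le_max_right a 0) (show max b 0 ∈ Ici 0 from le_max_right b 0) (max_le_max hab le_rfl)
  have μeq : ∀ a, 0 ≤ a → μ a = lam a := fun a ha => by simp [hμ, max_eq_left ha]
  have μ0 : ∀ a, lam 0 ≤ μ a := fun a =>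
    hmono (show (0:ℝ) ∈ Ici 0 from le_refl (0:ℝ)) (show max a 0 ∈ Ici 0 from le_max_right a 0) (le_max_right a 0)
  set F : ℝ → ℝ := fun u => ∫ v in (0:ℝ)..u, μ (x + t + v) with hFdef
  set Ψ : ℝ → ℝ := fun s => ∫ v in (0:ℝ)..s, μ (x + v) with hΨdef
  have hc1 : Continuous (fun v => μ (x + t + v)) :=
    μcont.comp (continuous_const.add continuous_id)
  have hc2 : Continuous (fun v => μ (x + v)) :=
    μcont.comp (continuous_const.add continuous_id)
  have hFd : ∀ u, HasDerivAt F (μ (x + t + u)) u := fun u =>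
    intervalIntegral.integral_hasDerivAt_right
      (hc1.intervalIntegrable _ _) (hc1.stronglyMeasurableAtFilter _ _) hc1.continuousAt
  have hΨd : ∀ s, HasDerivAt Ψ (μ (x + s)) s := fun s =>
    intervalIntegral.integral_hasDerivAt_right
      (hc2.intervalIntegrable _ _) (hc2.stronglyMeasurableAtFilter _ _) hc2.continuousAt
  have hFmono : StrictMono F := by
    apply strictMono_of_deriv_pos
    intro u
    rw [(hFd u).deriv]
    exact μpos _
  have hΨmono : StrictMono Ψ := by
    apply strictMono_of_deriv_pos
    intro s
    rw [(hΨd s).deriv]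
    exact μpos _
  have hFcont : Continuous F := by
    apply continuous_iff_continuousAt.2
    exact fun u => (hFd u).continuousAt
  -- linear bounds give surjectivity of F
  have hFbound : ∀ u : ℝ, 0 ≤ u → lam 0 * u ≤ F u := by
    intro u hu
    have h : (∫ v in (0:ℝ)..u, lam 0) ≤ ∫ v in (0:ℝ)..u, μ (x + t + v) :=
      intervalIntegral.integral_mono_on hu intervalIntegrable_const
        (hc1.intervalIntegrable _ _) (fun v _ => μ0 _)
    simp only [intervalIntegral.integral_const, smul_eq_mul, sub_zero] at h
    nlinarith
  have hFbound' : ∀ u : ℝ, u ≤ 0 → F u ≤ lam 0 * u := by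
    intro u hu
    have h : (∫ v in u..(0:ℝ), lam 0) ≤ ∫ v in u..(0:ℝ), μ (x + t + v) :=
      intervalIntegral.integral_mono_on hu intervalIntegrable_const
        (hc1.intervalIntegrable _ _) (fun v _ => μ0 _)
    have h1 : F u = -∫ v in u..(0:ℝ), μ (x + t + v) := by
      rw [hFdef]
      simp [intervalIntegral.integral_symm u 0]
    simp only [intervalIntegral.integral_const, smul_eq_mul] at h
    rw [h1]
    nlinarith
  have hlam0 : 0 < lam 0 := hpos 0 le_rfl
  have hFsurj : Function.Surjective F := by
    apply Continuous.surjective hFcont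
    · apply tendsto_atTop_mono' _ _ (Tendsto.const_mul_atTop hlam0 tendsto_id)
      filter_upwards [eventually_ge_atTop (0:ℝ)] with u hu
      exact hFbound u hu
    · apply tendsto_atBot_mono' _ _ (Tendsto.const_mul_atBot hlam0 tendsto_id)
      filter_upwards [eventually_le_atBot (0:ℝ)] with u hu
      exact hFbound' u hu
  -- the inverse H of F
  set E : ℝ ≃o ℝ := StrictMono.orderIsoOfSurjective F hFmono hFsurj with hE
  set H : ℝ → ℝ := fun y => E.symm y with hH
  have hFH : ∀ y, F (H y) = y := fun y => E.apply_symm_apply y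
  have hHcont : Continuous H := (OrderIso.toHomeomorph E).symm.continuous
  have hHd : ∀ y, HasDerivAt H (μ (x + t + H y))⁻¹ y := fun y =>
    HasDerivAt.of_local_left_inverse hHcont.continuousAt (hFd (H y)) (μpos _).ne'
      (Filter.Eventually.of_forall hFH)
  -- relating F, Ψ to the hypotheses on G
  have hFG : ∀ s, 0 ≤ s → F (G s) = Ψ s := by
    intro s hs
    obtain ⟨hGs, hGe⟩ := hG s hs
    have e1 : F (G s) = ∫ u in (0:ℝ)..(G s), lam (x + t + u) := by
      apply intervalIntegral.integral_congr
      intro u hu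
      rw [Set.uIcc_of_le hGs] at hu
      exact μeq _ (by linarith [hu.1, ht])
    have e2 : Ψ s = ∫ u in (0:ℝ)..s, lam (x + u) := by
      apply intervalIntegral.integral_congr
      intro u hu
      rw [Set.uIcc_of_le hs] at hu
      exact μeq _ (by linarith [hu.1])
    rw [e1, e2, hGe]
  have hHG : ∀ s, 0 ≤ s → H (Ψ s) = G s := by
    intro s hs
    apply hFmono.injective
    rw [hFH, hFG s hs]
  -- key inequality : s ≤ t + G s
  have hkey : ∀ s, 0 ≤ s → s ≤ t + G s := by
    intro s hs
    obtain ⟨hGs, _⟩ := hG s hs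
    have hsplit : Ψ (t + G s) = Ψ t + F (G s) := by
      have hadj : (∫ v in (0:ℝ)..t, μ (x + v)) + (∫ v in t..(t + G s), μ (x + v))
          = ∫ v in (0:ℝ)..(t + G s), μ (x + v) :=
        intervalIntegral.integral_add_adjacent_intervals
          (hc2.intervalIntegrable _ _) (hc2.intervalIntegrable _ _)
      have hshift : (∫ u in (0:ℝ)..(G s), μ (x + t + u))
          = ∫ v in t..(t + G s), μ (x + v) := by
        have := intervalIntegral.integral_comp_add_left (a := (0:ℝ)) (b := G s)
          (fun v => μ (x + v)) t
        simp only [add_zero] at this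
        rw [← this]
        apply intervalIntegral.integral_congr
        intro u _
        ring_nf
      rw [hΨdef, hFdef]
      simp only []
      rw [hshift, ← hadj]
    have hΨt : Ψ 0 < Ψ t := hΨmono ht
    have hΨ0 : Ψ 0 = 0 := by simp [hΨdef]
    have : Ψ s < Ψ (t + G s) := by
      rw [hsplit, hFG s hs]
      linarith
    exact (hΨmono.lt_iff_lt.mp this).le
  -- the derivative candidate
  set c : ℝ → ℝ := fun s => (μ (x + t + H (Ψ s)))⁻¹ * μ (x + s) with hcdef
  have hgd : ∀ s, HasDerivAt (fun s => H (Ψ s)) (c s) s := fun s =>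
    (hHd (Ψ s)).comp s (hΨd s)
  have hc_nonneg : ∀ s, 0 ≤ c s := fun s =>
    mul_nonneg (inv_nonneg.2 (μpos _).le) (μpos _).le
  have hc_le_one : ∀ s, 0 ≤ s → c s ≤ 1 := by
    intro s hs
    have h1 : μ (x + s) ≤ μ (x + t + H (Ψ s)) := by
      rw [hHG s hs]
      exact μmono (by linarith [hkey s hs])
    rw [hcdef]
    simp only []
    rw [inv_mul_le_one₀ (μpos _)]
    exact h1
  -- G has the within-derivative c s on Ici 0
  have hGwithin : ∀ s ∈ Ici (0:ℝ), HasDerivWithinAt G (c s) (Ici 0) s := by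
    intro s hs
    exact ((hgd s).hasDerivWithinAt).congr (fun y hy => (hHG y hy).symm) (hHG s hs).symm
  constructor
  · intro s hs
    by_cases hdiff : DifferentiableAt ℝ G s
    · have h1 : derivWithin G (Ici 0) s = c s :=
        (hGwithin s hs).derivWithin (uniqueDiffOn_Ici 0 s hs)
      have h2 : derivWithin G (Ici 0) s = deriv G s :=
        hdiff.hasDerivAt.hasDerivWithinAt.derivWithin (uniqueDiffOn_Ici 0 s hs)
      rw [← h2, h1]
      exact ⟨hc_nonneg s, hc_le_one s hs⟩
    · rw [deriv_zero_of_not_differentiableAt hdiff]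
      exact ⟨le_rfl, zero_le_one⟩
  · apply Convex.lipschitzOnWith_of_nnnorm_hasDerivWithin_le (convex_Ici 0) hGwithin
    intro s hs
    rw [← NNReal.coe_le_coe, coe_nnnorm, Real.norm_eq_abs, abs_of_nonneg (hc_nonneg s)]
    exact hc_le_one s hs
end

section
/- Let λ : ℝ₊ → (0,∞) be smooth and nondecreasing with λ(0) = λ_* > 0, and define Kf(x) = ∫_0^∞ f(x+t) λ(x+t) e^{−∫_0^t λ(x+s)ds} dt. Then for all smooth f with bounded derivative, |(Kf)'(x)| ≤ K(|f'|)(x) for every x ≥ 0. -/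
open Set MeasureTheory

lemma aux_shift (x : ℝ) (g : ℝ → ℝ) :
    (∫ t in Ici (0:ℝ), g (x + t)) = ∫ u in Ici x, g u := by
  have h1 := (measurePreserving_add_left volume x).setIntegral_preimage_emb
      (measurableEmbedding_addLeft x) g (Ici x)
  simpa using h1

noncomputable def Lm (lam : ℝ → ℝ) (u : ℝ) : ℝ := ∫ s in (0:ℝ)..u, lam s
noncomputable def Ee (lam : ℝ → ℝ) (u : ℝ) : ℝ := Real.exp (-(Lm lam u))

lemma Lm_hasDeriv {lam : ℝ → ℝ} (hc : Continuous lam) (u : ℝ) :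
    HasDerivAt (Lm lam) (lam u) u :=
  intervalIntegral.integral_hasDerivAt_right (hc.intervalIntegrable 0 u)
    hc.stronglyMeasurable.stronglyMeasurableAtFilter hc.continuousAt

lemma Ee_hasDeriv {lam : ℝ → ℝ} (hc : Continuous lam) (u : ℝ) :
    HasDerivAt (Ee lam) (-(lam u * Ee lam u)) u := by
  have := ((Lm_hasDeriv hc u).neg).exp
  show HasDerivAt (fun x => Real.exp (-Lm lam x)) _ u
  simpa [Ee, mul_comm] using this

lemma Lm_diff {lam : ℝ → ℝ} (hc : Continuous lam) (a u : ℝ) :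
    Lm lam u - Lm lam a = ∫ s in a..u, lam s := by
  have : (∫ s in (0:ℝ)..a, lam s) + ∫ s in a..u, lam s = ∫ s in (0:ℝ)..u, lam s :=
    intervalIntegral.integral_add_adjacent_intervals
      (hc.intervalIntegrable 0 a) (hc.intervalIntegrable a u)
  simp only [Lm]
  linarith [this]

lemma Lm_lb {lam : ℝ → ℝ} (hc : Continuous lam) {lamStar : ℝ}
    (hmono : MonotoneOn lam (Ici 0)) (hstar : lam 0 = lamStar)
    {a u : ℝ} (ha : 0 ≤ a) (hau : a ≤ u) :
    Lm lam a + lamStar * (u - a) ≤ Lm lam u := by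
  have key : (∫ s in a..u, (lamStar : ℝ)) ≤ ∫ s in a..u, lam s := by
    apply intervalIntegral.integral_mono_on (μ := volume) hau
      (intervalIntegrable_const (μ := volume)) (hc.intervalIntegrable a u)
    intro s hs
    rw [← hstar]
    exact hmono (le_refl (0:ℝ)) (le_trans ha hs.1) (le_trans ha hs.1)
  rw [intervalIntegral.integral_const] at key
  have := Lm_diff hc a u
  simp only [smul_eq_mul] at key
  linarith

lemma Ee_ub {lam : ℝ → ℝ} (hc : Continuous lam) {lamStar : ℝ}
    (hmono : MonotoneOn lam (Ici 0)) (hstar : lam 0 = lamStar)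
    {a u : ℝ} (ha : 0 ≤ a) (hau : a ≤ u) :
    Ee lam u ≤ Ee lam a * Real.exp (-(lamStar * (u - a))) := by
  rw [Ee, Ee, ← Real.exp_add]
  apply Real.exp_le_exp.2
  have := Lm_lb hc hmono hstar ha hau
  linarith

lemma Ee_pos (lam : ℝ → ℝ) (u : ℝ) : 0 < Ee lam u := Real.exp_pos _

lemma Ee_zero (lam : ℝ → ℝ) : Ee lam 0 = 1 := by simp [Ee, Lm]

lemma Lm_cont {lam : ℝ → ℝ} (hc : Continuous lam) : Continuous (Lm lam) :=
  continuous_iff_continuousAt.2 fun u => (Lm_hasDeriv hc u).continuousAt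

lemma Ee_cont {lam : ℝ → ℝ} (hc : Continuous lam) : Continuous (Ee lam) :=
  ((Lm_cont hc).neg).rexp

lemma aux_exp_int {c : ℝ} (hc : 0 < c) {R : ℝ} (hR : 0 ≤ R) :
    (∫ u in (0:ℝ)..R, Real.exp (-(c*u))) ≤ 1/c := by
  have key : (∫ u in (0:ℝ)..R, Real.exp (-(c*u)))
      = (-Real.exp (-(c*R))/c) - (-Real.exp (-(c*0))/c) := by
    apply intervalIntegral.integral_eq_sub_of_hasDerivAt
    · intro u _
      have h1 : HasDerivAt (fun u : ℝ => -(c*u)) (-c) u := by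
        simpa using (((hasDerivAt_id u).const_mul c).fun_neg :
          HasDerivAt (fun u : ℝ => -(c*u)) (-(c*1)) u)
      have h4 := (h1.exp.div_const c).fun_neg
      have h5 : -(Real.exp (-(c*u)) * -c / c) = Real.exp (-(c*u)) := by field_simp
      rw [h5] at h4
      simpa [neg_div] using h4
    · exact (Real.continuous_exp.comp (by continuity)).intervalIntegrable 0 R
  rw [key]
  have h2 : 0 < Real.exp (-(c*R)) := Real.exp_pos _
  have h3 : Real.exp (-(c*0)) = 1 := by simp
  rw [h3]
  rw [div_sub_div_same, div_le_div_iff₀ hc hc]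
  nlinarith [Real.exp_pos (-(c*R))]

lemma Ee_le_exp {lam : ℝ → ℝ} (hc : Continuous lam) {lamStar : ℝ}
    (hmono : MonotoneOn lam (Ici 0)) (hstar : lam 0 = lamStar)
    {u : ℝ} (hu : 0 ≤ u) : Ee lam u ≤ Real.exp (-(lamStar * u)) := by
  have := Ee_ub hc hmono hstar (le_refl (0:ℝ)) hu
  simpa [Ee_zero] using this

lemma master_ibp {lam : ℝ → ℝ} (hc : Continuous lam) {A C : ℝ} {R : ℝ} (hR : 0 ≤ R) :
    (∫ u in (0:ℝ)..R, ((A + C*u) * (lam u * Ee lam u) - C * Ee lam u))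
      = A * Ee lam 0 - (A + C*R) * Ee lam R := by
  have key : ∀ u ∈ uIcc (0:ℝ) R, HasDerivAt (fun u => -((A + C*u) * Ee lam u))
      ((A + C*u) * (lam u * Ee lam u) - C * Ee lam u) u := by
    intro u _
    have h1 : HasDerivAt (fun u : ℝ => A + C*u) C u := by
      simpa using (((hasDerivAt_id u).const_mul C).const_add A :
        HasDerivAt (fun u : ℝ => A + C*u) (C*1) u)
    have h2 := (h1.fun_mul (Ee_hasDeriv hc u)).fun_neg
    exact h2.congr_deriv (by ring)
  have h3 := intervalIntegral.integral_eq_sub_of_hasDerivAt key ?_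
  · rw [h3]; ring
  · apply Continuous.intervalIntegrable
    exact ((continuous_const.add (continuous_const.mul continuous_id)).mul
      ((hc.mul (Ee_cont hc)))).sub (continuous_const.mul (Ee_cont hc))

lemma master_int {lam : ℝ → ℝ} (hc : Continuous lam) (hpos : ∀ x ≥ (0:ℝ), 0 < lam x)
    (hmono : MonotoneOn lam (Ici 0)) {lamStar : ℝ} (hstar : lam 0 = lamStar)
    (hstarpos : 0 < lamStar) {A C : ℝ} (hA : 0 ≤ A) (hC : 0 ≤ C) :
    IntegrableOn (fun u => (A + C*u) * (lam u * Ee lam u)) (Ici 0) := by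
  rw [integrableOn_Ici_iff_integrableOn_Ioi]
  have hgc : Continuous (fun u => (A + C*u) * (lam u * Ee lam u)) :=
    (continuous_const.add (continuous_const.mul continuous_id)).mul (hc.mul (Ee_cont hc))
  apply integrableOn_Ioi_of_intervalIntegral_norm_bounded (A + C/lamStar) 0
      (fun n : ℕ => hgc.integrableOn_Ioc) (tendsto_natCast_atTop_atTop)
  filter_upwards [Filter.eventually_ge_atTop 0] with n _
  have hR : (0:ℝ) ≤ (n:ℝ) := Nat.cast_nonneg n
  have habs : (∫ u in (0:ℝ)..(n:ℝ), ‖(A + C*u) * (lam u * Ee lam u)‖)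
      = ∫ u in (0:ℝ)..(n:ℝ), (A + C*u) * (lam u * Ee lam u) := by
    apply intervalIntegral.integral_congr
    intro u hu
    rw [uIcc_of_le hR] at hu
    have h1 : 0 < lam u := hpos u hu.1
    have h2 : 0 ≤ A + C*u := by nlinarith [hu.1]
    have := Ee_pos lam u
    simp only [Real.norm_eq_abs]
    rw [abs_of_nonneg]
    positivity
  rw [habs]
  have hibp := master_ibp (A := A) (C := C) hc hR
  have hsplit : (∫ u in (0:ℝ)..(n:ℝ), (A + C*u) * (lam u * Ee lam u))
      = (∫ u in (0:ℝ)..(n:ℝ), ((A + C*u) * (lam u * Ee lam u) - C * Ee lam u))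
        + ∫ u in (0:ℝ)..(n:ℝ), C * Ee lam u := by
    rw [← intervalIntegral.integral_add]
    · congr 1; funext u; ring
    · apply Continuous.intervalIntegrable
      exact ((continuous_const.add (continuous_const.mul continuous_id)).mul
        (hc.mul (Ee_cont hc))).sub (continuous_const.mul (Ee_cont hc))
    · exact (continuous_const.mul (Ee_cont hc)).intervalIntegrable _ _
  have hEe : (∫ u in (0:ℝ)..(n:ℝ), C * Ee lam u) ≤ C * (1/lamStar) := by
    rw [intervalIntegral.integral_const_mul]
    apply mul_le_mul_of_nonneg_left _ hC
    calc (∫ u in (0:ℝ)..(n:ℝ), Ee lam u)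
        ≤ ∫ u in (0:ℝ)..(n:ℝ), Real.exp (-(lamStar * u)) := by
          apply intervalIntegral.integral_mono_on (μ := volume) hR
            ((Ee_cont hc).intervalIntegrable _ _)
            ((Real.continuous_exp.comp (by continuity)).intervalIntegrable _ _)
          intro u hu
          exact Ee_le_exp hc hmono hstar hu.1
      _ ≤ 1/lamStar := aux_exp_int hstarpos hR
  have hnonneg : 0 ≤ (A + C*(n:ℝ)) * Ee lam (n:ℝ) := by
    exact mul_nonneg (by nlinarith [mul_nonneg hC hR]) (Ee_pos lam (n:ℝ)).le
  rw [hsplit, hibp, Ee_zero]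
  have : C * (1/lamStar) = C/lamStar := by ring
  linarith [hEe]

lemma extend_int {g : ℝ → ℝ} (hg : Continuous g) (h0 : IntegrableOn g (Ici 0))
    (a : ℝ) : IntegrableOn g (Ici a) := by
  rcases le_or_gt 0 a with h | h
  · exact h0.mono_set (Ici_subset_Ici.2 h)
  · have h1 : IntegrableOn g (Icc a 0) := hg.integrableOn_Icc
    have h2 : Ici a = Icc a 0 ∪ Ici 0 := (Icc_union_Ici_eq_Ici h.le).symm
    rw [h2]
    exact h1.union h0

lemma Krw {lam : ℝ → ℝ} (hc : Continuous lam) (g : ℝ → ℝ) (y : ℝ) :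
    (∫ t in Ici (0:ℝ), g (y + t) * (lam (y + t) * Real.exp (-∫ s in (0:ℝ)..t, lam (y + s))))
      = Real.exp (Lm lam y) * ∫ u in Ici y, g u * (lam u * Ee lam u) := by
  have hpt : ∀ t : ℝ, g (y + t) * (lam (y + t) * Real.exp (-∫ s in (0:ℝ)..t, lam (y + s)))
      = Real.exp (Lm lam y) * (g (y + t) * (lam (y + t) * Ee lam (y + t))) := by
    intro t
    have h1 : (∫ s in (0:ℝ)..t, lam (y + s)) = Lm lam (y + t) - Lm lam y := by
      rw [intervalIntegral.integral_comp_add_left lam y, add_zero, ← Lm_diff hc]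
    rw [h1]
    have h2 : Real.exp (-(Lm lam (y + t) - Lm lam y))
        = Real.exp (Lm lam y) * Ee lam (y + t) := by
      rw [Ee, ← Real.exp_add]
      congr 1
      ring
    rw [h2]
    ring
  simp_rw [hpt]
  rw [MeasureTheory.integral_const_mul]
  congr 1
  exact aux_shift y (fun u => g u * (lam u * Ee lam u))

lemma poly_exp_tendsto {c A B : ℝ} (hc : 0 < c) :
    Filter.Tendsto (fun R => (A + B * R) * Real.exp (-(c * R))) Filter.atTop (nhds 0) := by
  have h1 : Filter.Tendsto (fun R : ℝ => A * Real.exp (-(c * R))) Filter.atTop (nhds 0) := by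
    have := (Real.tendsto_exp_neg_atTop_nhds_zero).comp
      (Filter.Tendsto.const_mul_atTop hc Filter.tendsto_id)
    simpa using this.const_mul A
  have h2 : Filter.Tendsto (fun R : ℝ => (B/c) * ((c * R) * Real.exp (-(c * R))))
      Filter.atTop (nhds 0) := by
    have base : Filter.Tendsto (fun y : ℝ => y * Real.exp (-y)) Filter.atTop (nhds 0) := by
      simpa using Real.tendsto_pow_mul_exp_neg_atTop_nhds_zero 1
    have := (base.comp (Filter.Tendsto.const_mul_atTop hc Filter.tendsto_id)).const_mul (B/c)
    simpa [Function.comp] using this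
  have := h1.add h2
  simp only [add_zero] at this
  apply this.congr
  intro R
  field_simp

set_option maxHeartbeats 1000000 in
theorem stmt_15 (lam : ℝ → ℝ) (hsm : ContDiff ℝ (⊤ : ℕ∞) lam) (hpos : ∀ x ≥ (0:ℝ), 0 < lam x)
    (hmono : MonotoneOn lam (Ici 0)) (lamStar : ℝ) (hstar : lam 0 = lamStar)
    (hstarpos : 0 < lamStar)
    (f : ℝ → ℝ) (hf : ContDiff ℝ (⊤ : ℕ∞) f) (hbd : ∃ C, ∀ x, |deriv f x| ≤ C) :
    ∀ x ≥ (0:ℝ),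
      |deriv (fun y => ∫ t in Ici (0:ℝ),
          f (y + t) * (lam (y + t) * Real.exp (-∫ s in (0:ℝ)..t, lam (y + s)))) x|
        ≤ ∫ t in Ici (0:ℝ),
            |deriv f (x + t)| * (lam (x + t) * Real.exp (-∫ s in (0:ℝ)..t, lam (x + s))) := by
  intro x hx
  obtain ⟨C0, hC0⟩ := hbd
  have hC0nn : 0 ≤ C0 := le_trans (abs_nonneg _) (hC0 0)
  have hc : Continuous lam := hsm.continuous
  have hfc : Continuous f := hf.continuous
  have hfd : Differentiable ℝ f := hf.differentiable (by simp)
  have hf'c : Continuous (deriv f) := hf.continuous_deriv (by simp)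
  set A := |f 0| with hA
  have hAnn : 0 ≤ A := abs_nonneg _
  -- growth bound on f
  have hfb : ∀ u : ℝ, 0 ≤ u → |f u| ≤ A + C0 * u := by
    intro u hu
    have hftc : f u - f 0 = ∫ s in (0:ℝ)..u, deriv f s := by
      symm
      apply intervalIntegral.integral_deriv_eq_sub
      · intro s _; exact hfd.differentiableAt
      · exact hf'c.intervalIntegrable 0 u
    have hb2 : ‖∫ s in (0:ℝ)..u, deriv f s‖ ≤ C0 * |u - 0| := by
      apply intervalIntegral.norm_integral_le_of_norm_le_const
      intro s _
      rw [Real.norm_eq_abs]; exact hC0 s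
    rw [← hftc, Real.norm_eq_abs] at hb2
    rw [sub_zero, abs_of_nonneg hu] at hb2
    have := abs_sub_abs_le_abs_sub (f u) (f 0)
    rw [hA]
    linarith
  -- continuity of the kernel integrand
  have hEc : Continuous (Ee lam) := Ee_cont hc
  have hhcont : Continuous (fun u => f u * (lam u * Ee lam u)) := hfc.mul (hc.mul hEc)
  -- integrability facts
  have hmaster := master_int hc hpos hmono hstar hstarpos hAnn hC0nn
  have hh_int0 : IntegrableOn (fun u => f u * (lam u * Ee lam u)) (Ici 0) := by
    apply MeasureTheory.Integrable.mono hmaster hhcont.aestronglyMeasurable.restrict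
    rw [MeasureTheory.ae_restrict_iff' measurableSet_Ici]
    filter_upwards with u hu
    have h1 : 0 < lam u := hpos u hu
    have h2 := Ee_pos lam u
    have h3 : 0 ≤ A + C0 * u := by nlinarith [mul_nonneg hC0nn (mem_Ici.1 hu)]
    have e1 : ‖f u * (lam u * Ee lam u)‖ = |f u| * (lam u * Ee lam u) := by
      rw [Real.norm_eq_abs, abs_mul, abs_of_nonneg (by positivity : (0:ℝ) ≤ lam u * Ee lam u)]
    have e2 : ‖(A + C0 * u) * (lam u * Ee lam u)‖ = (A + C0 * u) * (lam u * Ee lam u) := by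
      rw [Real.norm_eq_abs, abs_of_nonneg (mul_nonneg h3 (by positivity))]
    rw [e1, e2]
    exact mul_le_mul_of_nonneg_right (hfb u hu) (by positivity)
  have hh_int : ∀ a : ℝ, IntegrableOn (fun u => f u * (lam u * Ee lam u)) (Ici a) :=
    extend_int hhcont hh_int0
  have hexp_int : IntegrableOn (fun u => C0 * Real.exp (-(lamStar * u))) (Ici 0) := by
    rw [integrableOn_Ici_iff_integrableOn_Ioi]
    have h0 : IntegrableOn (fun u => Real.exp (-(lamStar * u))) (Ioi 0) := by
      simpa [neg_mul] using exp_neg_integrableOn_Ioi 0 hstarpos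
    exact h0.const_mul C0
  have hf'E_int : IntegrableOn (fun u => deriv f u * Ee lam u) (Ici 0) := by
    apply MeasureTheory.Integrable.mono hexp_int (hf'c.fun_mul hEc).aestronglyMeasurable.restrict
    rw [MeasureTheory.ae_restrict_iff' measurableSet_Ici]
    filter_upwards with u hu
    have h2 := Ee_pos lam u
    have h4 := Ee_le_exp hc hmono hstar (mem_Ici.1 hu)
    have h5 : (0:ℝ) < Real.exp (-(lamStar * u)) := Real.exp_pos _
    have e1 : ‖deriv f u * Ee lam u‖ = |deriv f u| * Ee lam u := by
      rw [Real.norm_eq_abs, abs_mul, abs_of_nonneg h2.le]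
    have e2 : ‖C0 * Real.exp (-(lamStar * u))‖ = C0 * Real.exp (-(lamStar * u)) := by
      rw [Real.norm_eq_abs, abs_of_nonneg (by positivity)]
    rw [e1, e2]
    nlinarith [hC0 u, abs_nonneg (deriv f u)]
  have habsf'E_int : IntegrableOn (fun u => |deriv f u| * Ee lam u) (Ici 0) := by
    apply MeasureTheory.Integrable.congr hf'E_int.abs
    filter_upwards with u
    rw [abs_mul, abs_of_nonneg (Ee_pos lam u).le]
  have habslamEe_int0 : IntegrableOn (fun u => |deriv f u| * (lam u * Ee lam u)) (Ici 0) := by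
    have hm2 : IntegrableOn (fun u => C0 * (lam u * Ee lam u)) (Ici 0) := by
      have := master_int hc hpos hmono hstar hstarpos hC0nn (le_refl (0:ℝ))
      apply MeasureTheory.Integrable.congr this
      filter_upwards with u
      ring_nf
    apply MeasureTheory.Integrable.mono hm2 ((hf'c.abs.fun_mul (hc.fun_mul hEc)).aestronglyMeasurable.restrict)
    rw [MeasureTheory.ae_restrict_iff' measurableSet_Ici]
    filter_upwards with u hu
    have h1 : 0 < lam u := hpos u hu
    have h2 := Ee_pos lam u
    have e1 : ‖|deriv f u| * (lam u * Ee lam u)‖ = |deriv f u| * (lam u * Ee lam u) := by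
      rw [Real.norm_eq_abs, abs_of_nonneg (mul_nonneg (abs_nonneg _) (by positivity))]
    have e2 : ‖C0 * (lam u * Ee lam u)‖ = C0 * (lam u * Ee lam u) := by
      rw [Real.norm_eq_abs, abs_of_nonneg (mul_nonneg hC0nn (by positivity))]
    rw [e1, e2]
    exact mul_le_mul_of_nonneg_right (hC0 u) (by positivity)
  -- the shifted/rewritten kernel
  set F : ℝ → ℝ := fun y => ∫ u in Ici y, f u * (lam u * Ee lam u) with hFdef
  have hKfun : (fun y => ∫ t in Ici (0:ℝ),
      f (y + t) * (lam (y + t) * Real.exp (-∫ s in (0:ℝ)..t, lam (y + s))))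
      = fun y => Real.exp (Lm lam y) * F y := by
    funext y
    exact Krw hc f y
  -- derivative of F
  have hderivF : HasDerivAt F (-(f x * (lam x * Ee lam x))) x := by
    have hax : x - 1 < x := by linarith
    have h1 : HasDerivAt (fun y => (∫ u in Ici (x-1), f u * (lam u * Ee lam u))
        - ∫ u in (x-1)..y, f u * (lam u * Ee lam u)) (-(f x * (lam x * Ee lam x))) x := by
      have h2 : HasDerivAt (fun y => ∫ u in (x-1)..y, f u * (lam u * Ee lam u))
          (f x * (lam x * Ee lam x)) x :=
        intervalIntegral.integral_hasDerivAt_right (hhcont.intervalIntegrable _ _)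
          hhcont.stronglyMeasurable.stronglyMeasurableAtFilter hhcont.continuousAt
      exact h2.const_sub _
    apply h1.congr_of_eventuallyEq
    filter_upwards [Ioi_mem_nhds hax] with y hy
    have hy' : x - 1 ≤ y := le_of_lt hy
    have hsplit : (∫ u in Ioi (x-1), f u * (lam u * Ee lam u))
        = (∫ u in Ioc (x-1) y, f u * (lam u * Ee lam u))
          + ∫ u in Ioi y, f u * (lam u * Ee lam u) := by
      rw [← MeasureTheory.setIntegral_union (Ioc_disjoint_Ioi le_rfl) measurableSet_Ioi
        ((hh_int (x-1)).mono_set (fun u hu => le_of_lt hu.1))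
        ((hh_int y).mono_set (fun u hu => mem_Ici.2 (le_of_lt hu))),
        Ioc_union_Ioi_eq_Ioi hy']
    have hFy : F y = ∫ u in Ioi y, f u * (lam u * Ee lam u) :=
      MeasureTheory.integral_Ici_eq_integral_Ioi
    rw [hFy, intervalIntegral.integral_of_le hy', MeasureTheory.integral_Ici_eq_integral_Ioi,
      hsplit]
    ring
  -- derivative of the kernel
  have hderivK : HasDerivAt (fun y => Real.exp (Lm lam y) * F y)
      (Real.exp (Lm lam x) * lam x * F x
        + Real.exp (Lm lam x) * -(f x * (lam x * Ee lam x))) x := by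
    have hE' : HasDerivAt (fun y => Real.exp (Lm lam y)) (Real.exp (Lm lam x) * lam x) x :=
      (Lm_hasDeriv hc x).exp
    exact hE'.mul hderivF
  -- integration by parts identity
  have hibp : ∀ R : ℝ, (∫ u in x..R,
      (f u * (lam u * Ee lam u) - deriv f u * Ee lam u))
      = f x * Ee lam x - f R * Ee lam R := by
    intro R
    have key : ∀ u ∈ uIcc x R, HasDerivAt (fun u => -(f u * Ee lam u))
        (f u * (lam u * Ee lam u) - deriv f u * Ee lam u) u := by
      intro u _
      have h1 : HasDerivAt f (deriv f u) u := hfd.differentiableAt.hasDerivAt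
      have h2 := (h1.fun_mul (Ee_hasDeriv hc u)).fun_neg
      exact h2.congr_deriv (by ring)
    have h3 := intervalIntegral.integral_eq_sub_of_hasDerivAt key
      ((hhcont.sub (hf'c.mul hEc)).intervalIntegrable x R)
    rw [h3]
    ring
  -- integrability on Ioi x
  have hint_hh_x : IntegrableOn (fun u => f u * (lam u * Ee lam u)) (Ioi x) :=
    (hh_int x).mono_set Ioi_subset_Ici_self
  have hint_f'E_x : IntegrableOn (fun u => deriv f u * Ee lam u) (Ioi x) :=
    (hf'E_int.mono_set (Ici_subset_Ici.2 hx)).mono_set Ioi_subset_Ici_self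
  -- limits as R → ∞
  have t1 : Filter.Tendsto (fun R => ∫ u in x..R,
      (f u * (lam u * Ee lam u) - deriv f u * Ee lam u)) Filter.atTop
      (nhds ((∫ u in Ioi x, f u * (lam u * Ee lam u))
        - ∫ u in Ioi x, deriv f u * Ee lam u)) := by
    have hsub : IntegrableOn
        (fun u => f u * (lam u * Ee lam u) - deriv f u * Ee lam u) (Ioi x) :=
      hint_hh_x.sub hint_f'E_x
    have := intervalIntegral_tendsto_integral_Ioi x hsub Filter.tendsto_id
    simp only [id_eq] at this
    rwa [MeasureTheory.integral_sub hint_hh_x hint_f'E_x] at this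
  have tfR : Filter.Tendsto (fun R => f R * Ee lam R) Filter.atTop (nhds 0) := by
    apply squeeze_zero_norm'
      (a := fun R => (A + C0 * R) * Real.exp (-(lamStar * R)))
    · filter_upwards [Filter.eventually_ge_atTop (0:ℝ)] with R hR
      have h1 := hfb R hR
      have h2 := Ee_le_exp hc hmono hstar hR
      have h3 := Ee_pos lam R
      rw [Real.norm_eq_abs, abs_mul, abs_of_nonneg h3.le]
      nlinarith [abs_nonneg (f R), Real.exp_pos (-(lamStar * R))]
    · exact poly_exp_tendsto hstarpos
  have t2 : Filter.Tendsto (fun R => f x * Ee lam x - f R * Ee lam R) Filter.atTop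
      (nhds (f x * Ee lam x - 0)) := (tendsto_const_nhds).sub tfR
  have hval : (∫ u in Ioi x, f u * (lam u * Ee lam u))
      - (∫ u in Ioi x, deriv f u * Ee lam u) = f x * Ee lam x - 0 := by
    apply tendsto_nhds_unique _ t2
    apply t1.congr
    intro R
    exact hibp R
  have hFx : F x = f x * Ee lam x + ∫ u in Ioi x, deriv f u * Ee lam u := by
    have : F x = ∫ u in Ioi x, f u * (lam u * Ee lam u) :=
      MeasureTheory.integral_Ici_eq_integral_Ioi
    rw [this]
    linarith [hval]
  -- conclude
  rw [hKfun, hderivK.deriv]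
  have hRHS : (∫ t in Ici (0:ℝ),
      |deriv f (x + t)| * (lam (x + t) * Real.exp (-∫ s in (0:ℝ)..t, lam (x + s))))
      = Real.exp (Lm lam x) * ∫ u in Ici x, |deriv f u| * (lam u * Ee lam u) := by
    simpa using Krw hc (fun u => |deriv f u|) x
  rw [hRHS]
  have hval2 : Real.exp (Lm lam x) * lam x * F x
      + Real.exp (Lm lam x) * -(f x * (lam x * Ee lam x))
      = Real.exp (Lm lam x) * (lam x * ∫ u in Ioi x, deriv f u * Ee lam u) := by
    rw [hFx]; ring
  rw [hval2, abs_mul, abs_of_nonneg (Real.exp_pos _).le]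
  apply mul_le_mul_of_nonneg_left _ (Real.exp_pos _).le
  rw [abs_mul, abs_of_nonneg (hpos x hx).le]
  have habs_int_x : IntegrableOn (fun u => |deriv f u| * Ee lam u) (Ioi x) :=
    (habsf'E_int.mono_set (Ici_subset_Ici.2 hx)).mono_set Ioi_subset_Ici_self
  have habslamEe_int_x : IntegrableOn
      (fun u => |deriv f u| * (lam u * Ee lam u)) (Ioi x) :=
    (habslamEe_int0.mono_set (Ici_subset_Ici.2 hx)).mono_set Ioi_subset_Ici_self
  have hI1 : |∫ u in Ioi x, deriv f u * Ee lam u|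
      ≤ ∫ u in Ioi x, |deriv f u| * Ee lam u := by
    have h1 := MeasureTheory.norm_integral_le_integral_norm
      (μ := volume.restrict (Ioi x)) (fun u => deriv f u * Ee lam u)
    have h2 : (∫ u in Ioi x, ‖deriv f u * Ee lam u‖) = ∫ u in Ioi x, |deriv f u| * Ee lam u := by
      apply MeasureTheory.integral_congr_ae
      filter_upwards with u
      rw [Real.norm_eq_abs, abs_mul, abs_of_nonneg (Ee_pos lam u).le]
    rw [← h2]
    rw [← Real.norm_eq_abs]
    exact h1
  have hstep : (∫ u in Ioi x, lam x * (|deriv f u| * Ee lam u))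
      ≤ ∫ u in Ioi x, |deriv f u| * (lam u * Ee lam u) := by
    apply MeasureTheory.setIntegral_mono_on (habs_int_x.const_mul (lam x)) habslamEe_int_x
      measurableSet_Ioi
    intro u hu
    have h1 : lam x ≤ lam u := hmono hx (le_trans hx (le_of_lt hu)) (le_of_lt hu)
    have h2 := Ee_pos lam u
    nlinarith [mul_nonneg (mul_nonneg (abs_nonneg (deriv f u)) h2.le) (sub_nonneg.2 h1)]
  rw [MeasureTheory.integral_Ici_eq_integral_Ioi]
  calc lam x * |∫ u in Ioi x, deriv f u * Ee lam u|
      ≤ lam x * ∫ u in Ioi x, |deriv f u| * Ee lam u :=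
        mul_le_mul_of_nonneg_left hI1 (hpos x hx).le
    _ = ∫ u in Ioi x, lam x * (|deriv f u| * Ee lam u) :=
        (MeasureTheory.integral_const_mul _ _).symm
    _ ≤ _ := hstep
end

section
/- Let Ω ⊂ ℝ^d be open, λ : Ω → ℝ₊ smooth, Q a Markov kernel on Ω, a : Ω → (0,∞) smooth, and suppose there is M : Ω → ℝ₊ with a(x)|∇(Qf)(x)|² ≤ M(x)·Q(a|∇f|²)(x) for all smooth f and x. Then for all smooth f and x: (1/2)λ(x)[Q(a|∇f|²)(x) − a(x)|∇f(x)|²] − a(x)(∇f(x))ᵀ(∇λ(x))(Qf(x) − f(x)) − λ(x)a(x)(∇f(x))ᵀ(∇Qf(x) − ∇f(x)) ≥ −a(x)(∇f(x))ᵀ(∇λ(x))(Qf(x) − f(x)) + (λ(x)/2)(1 − M(x))·a(x)|∇f(x)|². -/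
open MeasureTheory
open scoped RealInnerProductSpace

theorem stmt_19 {d : ℕ} (Ω : Set (EuclideanSpace ℝ (Fin d))) (hΩ : IsOpen Ω)
    (lam : EuclideanSpace ℝ (Fin d) → ℝ) (hlam : ContDiff ℝ (⊤ : ℕ∞) lam)
    (hlamnn : ∀ x, 0 ≤ lam x)
    (Q : EuclideanSpace ℝ (Fin d) → Measure (EuclideanSpace ℝ (Fin d)))
    (hQ : ∀ x, IsProbabilityMeasure (Q x))
    (a : EuclideanSpace ℝ (Fin d) → ℝ) (ha : ContDiff ℝ (⊤ : ℕ∞) a) (hapos : ∀ x, 0 < a x)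
    (M : EuclideanSpace ℝ (Fin d) → ℝ) (hMnn : ∀ x, 0 ≤ M x)
    (hsub : ∀ f : EuclideanSpace ℝ (Fin d) → ℝ, ContDiff ℝ (⊤ : ℕ∞) f → ∀ x,
      a x * ‖gradient (fun x' => ∫ y, f y ∂(Q x')) x‖ ^ 2
        ≤ M x * ∫ y, a y * ‖gradient f y‖ ^ 2 ∂(Q x)) :
    ∀ f : EuclideanSpace ℝ (Fin d) → ℝ, ContDiff ℝ (⊤ : ℕ∞) f → ∀ x,
      (1 / 2) * lam x * ((∫ y, a y * ‖gradient f y‖ ^ 2 ∂(Q x)) - a x * ‖gradient f x‖ ^ 2)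
          - a x * ⟪gradient f x, gradient lam x⟫ * ((∫ y, f y ∂(Q x)) - f x)
          - lam x * a x * ⟪gradient f x,
              gradient (fun x' => ∫ y, f y ∂(Q x')) x - gradient f x⟫
        ≥ -(a x * ⟪gradient f x, gradient lam x⟫ * ((∫ y, f y ∂(Q x)) - f x))
          + (lam x / 2) * (1 - M x) * (a x * ‖gradient f x‖ ^ 2) := by

  intro f hf x
  set g := gradient f x with hg
  set h := gradient (fun x' => ∫ y, f y ∂(Q x')) x with hh
  set v := ∫ y, a y * ‖gradient f y‖ ^ 2 ∂(Q x) with hv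
  have hvnn : 0 ≤ v := integral_nonneg (fun y => mul_nonneg (hapos y).le (by positivity))
  have key : a x * ‖h‖ ^ 2 ≤ M x * v := hsub f hf x
  have hCS : ⟪g, h⟫ ≤ ‖g‖ * ‖h‖ := real_inner_le_norm g h
  have hAnn : 0 ≤ M x * (a x * ‖g‖ ^ 2) :=
    mul_nonneg (hMnn x) (mul_nonneg (hapos x).le (sq_nonneg _))
  have hga : a x * ⟪g, h⟫ ≤ (M x * (a x * ‖g‖ ^ 2) + v) / 2 := by
    rcases le_or_gt ⟪g, h⟫ 0 with hneg | hpos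
    · have hX : a x * ⟪g, h⟫ ≤ 0 := mul_nonpos_of_nonneg_of_nonpos (hapos x).le hneg
      linarith
    · have hsq : ⟪g, h⟫ ^ 2 ≤ (‖g‖ * ‖h‖) ^ 2 := pow_le_pow_left₀ hpos.le hCS 2
      have h1 : (a x * ⟪g, h⟫) ^ 2 ≤ (M x * (a x * ‖g‖ ^ 2)) * v := by
        have h2 : (a x * ⟪g, h⟫) ^ 2 ≤ (a x * ‖g‖ ^ 2) * (a x * ‖h‖ ^ 2) := by
          nlinarith [hsq, sq_nonneg (a x)]
        have h3 : (a x * ‖g‖ ^ 2) * (a x * ‖h‖ ^ 2) ≤ (a x * ‖g‖ ^ 2) * (M x * v) :=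
          mul_le_mul_of_nonneg_left key (mul_nonneg (hapos x).le (sq_nonneg _))
        nlinarith
      have hX : 0 < a x * ⟪g, h⟫ := mul_pos (hapos x) hpos
      nlinarith [h1, hX, hAnn, hvnn, sq_nonneg (M x * (a x * ‖g‖ ^ 2) - v)]
  have hmain := mul_le_mul_of_nonneg_left hga (hlamnn x)
  have hexp : ⟪g, h - g⟫ = ⟪g, h⟫ - ‖g‖ ^ 2 := by
    rw [inner_sub_right, real_inner_self_eq_norm_sq]
  rw [hexp]
  nlinarith [hmain, hlamnn x]
end
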